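/- arXiv:2303.15337 — 5 statements merged into one kernel-verified Lean document; each statement's English description precedes it below -/
import Mathlib

section
/- Let ℓ : [0,∞) → ℝ be coercive (sublevel sets precompact) and bounded from below, and lower semicontinuous. Let r_max be the largest minimizer of ℓ. Then the convex envelope of the map ξ ↦ ℓ(|ξ|) on ℝ^k equals the function ξ ↦ co(ℓ)(|ξ|) if |ξ| ≥ r_max, and ξ ↦ ℓ(r_max) if |ξ| < r_max, where co(ℓ) is the convex envelope of ℓ. In particular the convex envelope of a radial function is radial, of the form ξ ↦ ℓ̃(|ξ|) with ℓ̃ convex and nondecreasing. -/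
open Set Filter

noncomputable section

/-- The convex envelope of `f` on a set `s`: the pointwise supremum of all convex
functions on `s` lying below `f` on `s`. -/
def convexEnvOn {E : Type*} [AddCommGroup E] [Module ℝ E] (s : Set E) (f : E → ℝ) (x : E) : ℝ :=
  sSup {y : ℝ | ∃ g : E → ℝ, ConvexOn ℝ s g ∧ (∀ z ∈ s, g z ≤ f z) ∧ y = g x}

section aux

variable {E : Type*} [AddCommGroup E] [Module ℝ E] {s : Set E} {f : E → ℝ}

lemma bddAbove_envSet {x : E} (hx : x ∈ s) :
    BddAbove {y : ℝ | ∃ g : E → ℝ, ConvexOn ℝ s g ∧ (∀ z ∈ s, g z ≤ f z) ∧ y = g x} := by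
  refine ⟨f x, ?_⟩
  rintro y ⟨g, hg, hle, rfl⟩
  exact hle x hx

lemma le_convexEnvOn {g : E → ℝ} (hg : ConvexOn ℝ s g) (hle : ∀ z ∈ s, g z ≤ f z)
    {x : E} (hx : x ∈ s) : g x ≤ convexEnvOn s f x :=
  le_csSup (bddAbove_envSet hx) ⟨g, hg, hle, rfl⟩

lemma convexEnvOn_le {g₀ : E → ℝ} (hg₀ : ConvexOn ℝ s g₀) (hle₀ : ∀ z ∈ s, g₀ z ≤ f z)
    {x : E} (hx : x ∈ s) : convexEnvOn s f x ≤ f x := by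
  refine csSup_le ⟨g₀ x, g₀, hg₀, hle₀, rfl⟩ ?_
  rintro y ⟨g, hg, hle, rfl⟩
  exact hle x hx

lemma convexOn_convexEnvOn (hs : Convex ℝ s) {g₀ : E → ℝ} (hg₀ : ConvexOn ℝ s g₀)
    (hle₀ : ∀ z ∈ s, g₀ z ≤ f z) : ConvexOn ℝ s (convexEnvOn s f) := by
  refine ⟨hs, fun x hx y hy a b ha hb hab => ?_⟩
  refine csSup_le ⟨g₀ _, g₀, hg₀, hle₀, rfl⟩ ?_
  rintro t ⟨g, hg, hle, rfl⟩
  calc g (a • x + b • y) ≤ a • g x + b • g y := hg.2 hx hy ha hb hab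
    _ ≤ a • convexEnvOn s f x + b • convexEnvOn s f y := by
        have h1 : g x ≤ convexEnvOn s f x := le_convexEnvOn hg hle hx
        have h2 : g y ≤ convexEnvOn s f y := le_convexEnvOn hg hle hy
        simp only [smul_eq_mul]
        nlinarith

lemma convexOn_comp_mono {m : E → ℝ} (hm : ConvexOn ℝ s m) {t : Set ℝ} {φ : ℝ → ℝ}
    (hφ : ConvexOn ℝ t φ) (hmono : MonotoneOn φ t) (hmt : ∀ x ∈ s, m x ∈ t) :
    ConvexOn ℝ s (fun x => φ (m x)) := by
  refine ⟨hm.1, fun x hx y hy a b ha hb hab => ?_⟩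
  have h1 : m (a • x + b • y) ≤ a * m x + b * m y := by
    simpa [smul_eq_mul] using hm.2 hx hy ha hb hab
  have hmem : a * m x + b * m y ∈ t := by
    simpa [smul_eq_mul] using hφ.1 (hmt x hx) (hmt y hy) ha hb hab
  have hmem0 : m (a • x + b • y) ∈ t := hmt _ (hm.1 hx hy ha hb hab)
  calc φ (m (a • x + b • y)) ≤ φ (a * m x + b * m y) := hmono hmem0 hmem h1
    _ ≤ a • φ (m x) + b • φ (m y) := by
        simpa [smul_eq_mul] using hφ.2 (hmt x hx) (hmt y hy) ha hb hab

end aux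

/-- Convex envelopes of coercive radial functions. -/
theorem stmt0 (k : ℕ) (hk : 0 < k) (ℓ : ℝ → ℝ)
    (hcoer : Tendsto ℓ atTop atTop)
    (hbdd : ∃ c : ℝ, ∀ r : ℝ, 0 ≤ r → c ≤ ℓ r)
    (hlsc : LowerSemicontinuousOn ℓ (Ici (0:ℝ)))
    (rmax : ℝ) (hr0 : 0 ≤ rmax)
    (hminim : ∀ r : ℝ, 0 ≤ r → ℓ rmax ≤ ℓ r)
    (hlargest : ∀ r : ℝ, 0 ≤ r → (∀ s : ℝ, 0 ≤ s → ℓ r ≤ ℓ s) → r ≤ rmax) :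
    (∀ ξ : EuclideanSpace ℝ (Fin k),
        convexEnvOn univ (fun ζ : EuclideanSpace ℝ (Fin k) => ℓ ‖ζ‖) ξ =
          if rmax ≤ ‖ξ‖ then convexEnvOn (Ici (0:ℝ)) ℓ ‖ξ‖ else ℓ rmax) ∧
      ∃ ℓt : ℝ → ℝ, ConvexOn ℝ (Ici (0:ℝ)) ℓt ∧ MonotoneOn ℓt (Ici (0:ℝ)) ∧
        ∀ ξ : EuclideanSpace ℝ (Fin k),
          convexEnvOn univ (fun ζ : EuclideanSpace ℝ (Fin k) => ℓ ‖ζ‖) ξ = ℓt ‖ξ‖ := by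
  classical
  set coℓ : ℝ → ℝ := convexEnvOn (Ici (0:ℝ)) ℓ with hcoℓ
  -- the constant ℓ rmax is a competitor on Ici 0
  have hconst : ConvexOn ℝ (Ici (0:ℝ)) (fun _ : ℝ => ℓ rmax) := convexOn_const _ (convex_Ici 0)
  have hconstle : ∀ z ∈ Ici (0:ℝ), (fun _ : ℝ => ℓ rmax) z ≤ ℓ z := fun z hz => hminim z hz
  have hlo : ∀ r ∈ Ici (0:ℝ), ℓ rmax ≤ coℓ r := fun r hr => le_convexEnvOn hconst hconstle hr
  have hup : ∀ r ∈ Ici (0:ℝ), coℓ r ≤ ℓ r := fun r hr => convexEnvOn_le hconst hconstle hr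
  have hrmaxval : coℓ rmax = ℓ rmax :=
    le_antisymm (hup rmax hr0) (hlo rmax hr0)
  have hcoConv : ConvexOn ℝ (Ici (0:ℝ)) coℓ :=
    convexOn_convexEnvOn (convex_Ici 0) hconst hconstle
  -- coℓ is monotone on [rmax, ∞)
  have hmono : MonotoneOn coℓ (Ici rmax) := by
    intro r1 hr1 r2 hr2 h12
    rcases eq_or_lt_of_le (mem_Ici.mp hr1) with h | h
    · rw [← h, hrmaxval]; exact hlo r2 (le_trans hr0 (mem_Ici.mp hr2))
    · rcases eq_or_lt_of_le h12 with rfl | hlt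
      · exact le_rfl
      · have hd : (0:ℝ) < r2 - rmax := by linarith
        set a : ℝ := (r2 - r1) / (r2 - rmax) with ha_def
        set b : ℝ := (r1 - rmax) / (r2 - rmax) with hb_def
        have ha : 0 ≤ a := by
          apply div_nonneg <;> linarith
        have hb : 0 < b := by
          apply div_pos <;> linarith
        have hab : a + b = 1 := by
          rw [ha_def, hb_def]
          field_simp
          ring
        have hcomb : a • rmax + b • r2 = r1 := by
          simp only [smul_eq_mul, ha_def, hb_def]
          field_simp
          ring
        have hr2mem : r2 ∈ Ici (0:ℝ) := mem_Ici.mpr (le_trans hr0 (mem_Ici.mp hr2))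
        have hkey := hcoConv.2 (mem_Ici.mpr hr0 : rmax ∈ Ici (0:ℝ)) hr2mem ha hb.le hab
        rw [hcomb] at hkey
        simp only [smul_eq_mul] at hkey
        have hr1mem : r1 ∈ Ici (0:ℝ) := mem_Ici.mpr (le_trans hr0 (mem_Ici.mp hr1))
        have hlo1 : ℓ rmax ≤ coℓ r1 := hlo r1 hr1mem
        rw [hrmaxval] at hkey
        have habA : a * coℓ r1 + b * coℓ r1 = coℓ r1 := by
          rw [← add_mul, hab, one_mul]
        have e1 : a * ℓ rmax ≤ a * coℓ r1 := mul_le_mul_of_nonneg_left hlo1 ha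
        have e2 : b * coℓ r1 ≤ b * coℓ r2 := by linarith
        nlinarith [e2]
  -- the radial profile
  set ℓt : ℝ → ℝ := fun r => coℓ (max r rmax) with hℓt_def
  have hcoConv' : ConvexOn ℝ (Ici rmax) coℓ :=
    hcoConv.subset (Ici_subset_Ici.mpr hr0) (convex_Ici rmax)
  -- max(·, rmax) is convex on any convex set of ℝ
  have hmax_convex : ∀ (s : Set ℝ), Convex ℝ s → ConvexOn ℝ s (fun r => max r rmax) := by
    intro s hs
    refine ⟨hs, fun x hx y hy a b ha hb hab => ?_⟩
    simp only [smul_eq_mul]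
    apply max_le
    · nlinarith [le_max_left x rmax, le_max_right x rmax, le_max_left y rmax,
        le_max_right y rmax]
    · nlinarith [le_max_left x rmax, le_max_right x rmax, le_max_left y rmax,
        le_max_right y rmax]
  have hℓtConv : ConvexOn ℝ (Ici (0:ℝ)) ℓt :=
    convexOn_comp_mono (hmax_convex _ (convex_Ici 0)) hcoConv' hmono
      (fun x _ => mem_Ici.mpr (le_max_right x rmax))
  have hℓtMono : MonotoneOn ℓt (Ici (0:ℝ)) := by
    intro r1 _ r2 _ h12
    exact hmono (mem_Ici.mpr (le_max_right r1 rmax)) (mem_Ici.mpr (le_max_right r2 rmax))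
      (max_le_max h12 le_rfl)
  -- a unit vector in direction ξ (or any unit vector if ξ = 0)
  have hunit : ∀ ξ : EuclideanSpace ℝ (Fin k),
      ∃ u : EuclideanSpace ℝ (Fin k), ‖u‖ = 1 ∧ ‖ξ‖ • u = ξ := by
    intro ξ
    by_cases hξ0 : ξ = 0
    · refine ⟨EuclideanSpace.single ⟨0, hk⟩ (1:ℝ), ?_, ?_⟩
      · simp [EuclideanSpace.norm_single]
      · simp [hξ0]
    · refine ⟨‖ξ‖⁻¹ • ξ, norm_smul_inv_norm hξ0, ?_⟩
      rw [smul_smul, mul_inv_cancel₀ (norm_ne_zero_iff.mpr hξ0), one_smul]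
  -- the constant ℓ rmax is a competitor on univ
  have hFconst : ConvexOn ℝ (univ : Set (EuclideanSpace ℝ (Fin k)))
      (fun _ => ℓ rmax) := convexOn_const _ convex_univ
  have hFconstle : ∀ z ∈ (univ : Set (EuclideanSpace ℝ (Fin k))),
      (fun _ => ℓ rmax) z ≤ ℓ ‖z‖ := fun z _ => hminim _ (norm_nonneg z)
  -- the main claim: the envelope equals ℓt ∘ norm
  have hmain : ∀ ξ : EuclideanSpace ℝ (Fin k),
      convexEnvOn univ (fun ζ : EuclideanSpace ℝ (Fin k) => ℓ ‖ζ‖) ξ = ℓt ‖ξ‖ := by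
    intro ξ
    obtain ⟨u, hu, huξ⟩ := hunit ξ
    apply le_antisymm
    · -- upper bound: every competitor g satisfies g ξ ≤ ℓt ‖ξ‖
      refine csSup_le ⟨ℓ rmax, (fun _ => ℓ rmax), hFconst, hFconstle, rfl⟩ ?_
      rintro y ⟨g, hg, hgle, rfl⟩
      rcases le_or_gt rmax ‖ξ‖ with hcase | hcase
      · -- restrict g to the line through u
        have hℓt_eq : ℓt ‖ξ‖ = coℓ ‖ξ‖ := by
          show coℓ (max ‖ξ‖ rmax) = coℓ ‖ξ‖
          rw [max_eq_left hcase]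
        rw [hℓt_eq]
        have hh : ConvexOn ℝ (Ici (0:ℝ)) (fun r : ℝ => g (r • u)) := by
          refine ⟨convex_Ici 0, fun x _ y _ a b ha hb hab => ?_⟩
          have := hg.2 (mem_univ (x • u)) (mem_univ (y • u)) ha hb hab
          simpa [smul_smul, add_smul, smul_eq_mul] using this
        have hhle : ∀ r ∈ Ici (0:ℝ), g (r • u) ≤ ℓ r := by
          intro r hr
          have := hgle (r • u) (mem_univ _)
          simpa [norm_smul, Real.norm_eq_abs, abs_of_nonneg (mem_Ici.mp hr), hu] using this
        have := le_convexEnvOn hh hhle (mem_Ici.mpr (norm_nonneg ξ))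
        rw [huξ] at this
        exact this
      · -- two-point argument: ξ is a convex combination of points of norm rmax
        have hℓt_eq : ℓt ‖ξ‖ = ℓ rmax := by
          show coℓ (max ‖ξ‖ rmax) = ℓ rmax
          rw [max_eq_right hcase.le, hrmaxval]
        rw [hℓt_eq]
        have hrpos : 0 < rmax := lt_of_le_of_lt (norm_nonneg ξ) hcase
        set t : ℝ := ‖ξ‖ with ht_def
        set a : ℝ := (rmax + t) / (2 * rmax) with ha_def
        set b : ℝ := (rmax - t) / (2 * rmax) with hb_def
        have htnn : 0 ≤ t := norm_nonneg ξ
        have ha : 0 ≤ a := by positivity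
        have hb : 0 ≤ b := by
          apply div_nonneg <;> linarith
        have hab : a + b = 1 := by
          rw [ha_def, hb_def]
          field_simp
          ring
        have hcomb : a • (rmax • u) + b • ((-rmax) • u) = ξ := by
          rw [smul_smul, smul_smul, ← add_smul, ← huξ]
          congr 1
          simp only [ha_def, hb_def]
          field_simp
          ring
        have hkey := hg.2 (mem_univ (rmax • u)) (mem_univ ((-rmax) • u)) ha hb hab
        rw [hcomb] at hkey
        have h1 : g (rmax • u) ≤ ℓ rmax := by
          have := hgle (rmax • u) (mem_univ _)
          simpa [norm_smul, Real.norm_eq_abs, abs_of_nonneg hr0, hu] using this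
        have h2 : g ((-rmax) • u) ≤ ℓ rmax := by
          have := hgle ((-rmax) • u) (mem_univ _)
          simpa [norm_smul, Real.norm_eq_abs, abs_of_nonneg hr0, hu] using this
        simp only [smul_eq_mul] at hkey
        have habL : a * ℓ rmax + b * ℓ rmax = ℓ rmax := by
          rw [← add_mul, hab, one_mul]
        linarith [mul_le_mul_of_nonneg_left h1 ha, mul_le_mul_of_nonneg_left h2 hb]
    · -- lower bound: ℓt ∘ norm is itself a competitor
      have hG : ConvexOn ℝ (univ : Set (EuclideanSpace ℝ (Fin k)))
          (fun ζ => coℓ (max ‖ζ‖ rmax)) := by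
        have hnorm : ConvexOn ℝ (univ : Set (EuclideanSpace ℝ (Fin k)))
            (fun ζ : EuclideanSpace ℝ (Fin k) => max ‖ζ‖ rmax) := by
          refine ⟨convex_univ, fun x _ y _ a b ha hb hab => ?_⟩
          have hn : ‖a • x + b • y‖ ≤ a * ‖x‖ + b * ‖y‖ := by
            calc ‖a • x + b • y‖ ≤ ‖a • x‖ + ‖b • y‖ := norm_add_le _ _
              _ = a * ‖x‖ + b * ‖y‖ := by
                  rw [norm_smul, norm_smul, Real.norm_eq_abs, Real.norm_eq_abs,
                    abs_of_nonneg ha, abs_of_nonneg hb]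
          simp only [smul_eq_mul]
          apply max_le
          · refine le_trans hn ?_
            nlinarith [le_max_left ‖x‖ rmax, le_max_left ‖y‖ rmax]
          · nlinarith [le_max_right ‖x‖ rmax, le_max_right ‖y‖ rmax]
        exact convexOn_comp_mono hnorm hcoConv' hmono
          (fun x _ => mem_Ici.mpr (le_max_right _ _))
      have hGle : ∀ z ∈ (univ : Set (EuclideanSpace ℝ (Fin k))),
          (fun ζ => coℓ (max ‖ζ‖ rmax)) z ≤ ℓ ‖z‖ := by
        intro z _
        rcases le_or_gt rmax ‖z‖ with h | h
        · simpa [max_eq_left h] using hup ‖z‖ (mem_Ici.mpr (norm_nonneg z))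
        · simp only [max_eq_right h.le]
          rw [hrmaxval]
          exact hminim _ (norm_nonneg z)
      exact le_convexEnvOn hG hGle (mem_univ ξ)
  refine ⟨fun ξ => ?_, ℓt, hℓtConv, hℓtMono, hmain⟩
  rw [hmain ξ]
  split_ifs with h
  · show coℓ (max ‖ξ‖ rmax) = coℓ ‖ξ‖
    rw [max_eq_left h]
  · show coℓ (max ‖ξ‖ rmax) = ℓ rmax
    rw [max_eq_right (le_of_not_ge h), hrmaxval]
end
end

section
/- Let W : ℝ^{m×d} → [0,∞) and ℓ(r) := inf_{|z|=r} W(z) be its radial minimum. Then for every r > 0, sup_{|η| ≤ r} ℓ*(η) = sup_{|η| ≤ r} W*(η), where ℓ* denotes the Fenchel conjugate of the radial function ξ ↦ ℓ(|ξ|) and W* the Fenchel conjugate of W. -/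
/-! Since `ℓ ≤ W`, we have `W* ≤ ℓ*`. Conversely, for `‖z‖ = ‖ξ‖` Cauchy–Schwarz gives
`⟪η, ξ⟫ - W z ≤ ‖η‖ ‖z‖ - W z = ⟪η', z⟫ - W z ≤ W* η'`, where `η'` is the multiple of `z` of
norm `‖η‖`; taking the infimum over such `z` bounds `ℓ* η` by `W*` on the ball of radius `‖η‖`. -/

open Set Filter

noncomputable section

/-- The Fenchel conjugate of a real-valued function on a real inner product space,
with values in `EReal`. -/
def fenchelConj {E : Type*} [NormedAddCommGroup E] [InnerProductSpace ℝ E]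
    (f : E → ℝ) (η : E) : EReal :=
  ⨆ ξ : E, (((inner ℝ η ξ : ℝ) - f ξ : ℝ) : EReal)

theorem EReal.coe_sub_csInf_le {S : Set ℝ} (hS : S.Nonempty) {a : ℝ} {B : EReal}
    (h : ∀ y ∈ S, ((a - y : ℝ) : EReal) ≤ B) : ((a - sInf S : ℝ) : EReal) ≤ B := by
  induction B with
  | bot =>
    obtain ⟨y, hy⟩ := hS
    exact absurd (le_bot_iff.mp (h y hy)) (EReal.coe_ne_bot _)
  | coe b =>
    have : a - b ≤ sInf S := le_csInf hS fun y hy => by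
      have := EReal.coe_le_coe_iff.mp (h y hy)
      linarith
    exact EReal.coe_le_coe_iff.mpr (by linarith)
  | top => exact le_top

section Radial

variable {E : Type*} [Norm E]

def radialInf (W : E → ℝ) (ξ : E) : ℝ :=
  sInf {y : ℝ | ∃ z : E, ‖z‖ = ‖ξ‖ ∧ y = W z}

theorem radialInf_le (W : E → ℝ) (hW : BddBelow (range W)) : radialInf W ≤ W := fun ξ =>
  csInf_le (hW.mono <| by rintro _ ⟨z, -, rfl⟩; exact mem_range_self z) ⟨ξ, rfl, rfl⟩

end Radial

section InnerProductSpace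

variable {E : Type*} [NormedAddCommGroup E] [InnerProductSpace ℝ E]

theorem exists_norm_le_real_inner_eq (z : E) {s : ℝ} (hs : 0 ≤ s) :
    ∃ v : E, ‖v‖ ≤ s ∧ inner ℝ v z = s * ‖z‖ := by
  rcases eq_or_ne z 0 with rfl | hz
  · exact ⟨0, by simpa using hs, by simp⟩
  have hz' : 0 < ‖z‖ := norm_pos_iff.mpr hz
  refine ⟨(s / ‖z‖) • z, ?_, ?_⟩
  · rw [norm_smul, Real.norm_of_nonneg (by positivity), div_mul_cancel₀ _ hz'.ne']
  · rw [real_inner_smul_left, real_inner_self_eq_norm_mul_norm]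
    field_simp

theorem coe_real_inner_sub_le_fenchelConj (f : E → ℝ) (η ξ : E) :
    (((inner ℝ η ξ : ℝ) - f ξ : ℝ) : EReal) ≤ fenchelConj f η :=
  le_iSup (fun ξ => (((inner ℝ η ξ : ℝ) - f ξ : ℝ) : EReal)) ξ

theorem fenchelConj_anti : Antitone (fenchelConj (E := E)) := fun _ _ hfg _ =>
  iSup_mono fun ξ => EReal.coe_le_coe_iff.mpr (sub_le_sub_left (hfg ξ) _)

theorem fenchelConj_radialInf_le (W : E → ℝ) (η : E) :
    fenchelConj (radialInf W) η ≤ ⨆ (η' : E) (_ : ‖η'‖ ≤ ‖η‖), fenchelConj W η' := by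
  refine iSup_le fun ξ => EReal.coe_sub_csInf_le (S := {y | ∃ z : E, ‖z‖ = ‖ξ‖ ∧ y = W z})
    ⟨W ξ, ξ, rfl, rfl⟩ ?_
  rintro _ ⟨z, hz, rfl⟩
  obtain ⟨η', hη', hinner⟩ := exists_norm_le_real_inner_eq z (norm_nonneg η)
  have hCS : inner ℝ η ξ ≤ inner ℝ η' z := by
    rw [hinner, hz]
    exact real_inner_le_norm η ξ
  calc (((inner ℝ η ξ : ℝ) - W z : ℝ) : EReal)
      ≤ (((inner ℝ η' z : ℝ) - W z : ℝ) : EReal) :=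
        EReal.coe_le_coe_iff.mpr (sub_le_sub_right hCS _)
    _ ≤ fenchelConj W η' := coe_real_inner_sub_le_fenchelConj W η' z
    _ ≤ ⨆ (η' : E) (_ : ‖η'‖ ≤ ‖η‖), fenchelConj W η' := le_iSup₂_of_le η' hη' le_rfl

theorem iSup_fenchelConj_radialInf_eq (W : E → ℝ) (hW : BddBelow (range W)) (r : ℝ) :
    ⨆ (η : E) (_ : ‖η‖ ≤ r), fenchelConj (radialInf W) η =
      ⨆ (η : E) (_ : ‖η‖ ≤ r), fenchelConj W η :=
  le_antisymm
    (iSup₂_le fun η hη => (fenchelConj_radialInf_le W η).trans <|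
      iSup₂_le fun η' hη' => le_iSup₂_of_le η' (hη'.trans hη) le_rfl)
    (iSup₂_mono fun η _ => fenchelConj_anti (radialInf_le W hW) η)

end InnerProductSpace

theorem stmt2_general (m d : ℕ)
    (W : EuclideanSpace ℝ (Fin m × Fin d) → ℝ) (hW : ∀ ξ, 0 ≤ W ξ) :
    ∀ r : ℝ, 0 < r →
      (⨆ (η : EuclideanSpace ℝ (Fin m × Fin d)) (_ : ‖η‖ ≤ r),
          fenchelConj
            (fun ξ => sInf {y : ℝ | ∃ z : EuclideanSpace ℝ (Fin m × Fin d),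
              ‖z‖ = ‖ξ‖ ∧ y = W z}) η) =
        ⨆ (η : EuclideanSpace ℝ (Fin m × Fin d)) (_ : ‖η‖ ≤ r), fenchelConj W η := fun r _ =>
  iSup_fenchelConj_radialInf_eq W ⟨0, by rintro _ ⟨ξ, rfl⟩; exact hW ξ⟩ r

/-- Let `W : ℝ^{m×d} → [0,∞)` and let `ℓ(r) = inf_{‖z‖ = r} W z` be its radial minimum.
Then for every `r > 0` the supremum of the Fenchel conjugate of the radial function
`ξ ↦ ℓ(‖ξ‖)` over the ball `‖η‖ ≤ r` equals the corresponding supremum for `W*`. -/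
theorem stmt2 (m d : ℕ) (hm : 0 < m) (hd : 0 < d)
    (W : EuclideanSpace ℝ (Fin m × Fin d) → ℝ) (hW : ∀ ξ, 0 ≤ W ξ) :
    ∀ r : ℝ, 0 < r →
      (⨆ (η : EuclideanSpace ℝ (Fin m × Fin d)) (_ : ‖η‖ ≤ r),
          fenchelConj
            (fun ξ => sInf {y : ℝ | ∃ z : EuclideanSpace ℝ (Fin m × Fin d),
              ‖z‖ = ‖ξ‖ ∧ y = W z}) η) =
        ⨆ (η : EuclideanSpace ℝ (Fin m × Fin d)) (_ : ‖η‖ ≤ r), fenchelConj W η :=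
  stmt2_general m d W hW
end
end

section
/- Let W : ℝ^{m×d} → [0,∞) be convex such that W(ξ) ≤ C ℓ(|ξ|) + Λ and ℓ(|ξ|) ≤ W(ξ) for all ξ, where ℓ : [0,∞) → [0,∞) is superlinear. Then W satisfies the mild monotonicity condition: there is a constant C' such that for all ξ and all ξ̃ with e_jᵀ(ξ−ξ̃) ∈ {0, e_jᵀξ} for every row index j, one has W(ξ̃) ≤ C' W(ξ) + Λ'. -/
open Set Filter

noncomputable section

/-- If a convex nonnegative `W` on `ℝ^{m×d}` is sandwiched between a superlinear radial
function `ℓ(‖·‖)` and `C ℓ(‖·‖) + Λ`, then `W` satisfies the mild monotonicity condition: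
there are `C', Λ'` with `W ξ' ≤ C' W ξ + Λ'` whenever `ξ'` is obtained from `ξ` by
setting some rows to zero. -/
theorem stmt12 (m d : ℕ) (W : EuclideanSpace ℝ (Fin m × Fin d) → ℝ)
    (hconv : ConvexOn ℝ univ W) (h0 : ∀ ξ, 0 ≤ W ξ)
    (ℓ : ℝ → ℝ) (hℓ0 : ∀ r : ℝ, 0 ≤ r → 0 ≤ ℓ r)
    (hsl : Tendsto (fun r : ℝ => ℓ r / r) atTop atTop)
    (C Λ : ℝ) (hC : 0 < C) (hΛ : 0 ≤ Λ)
    (hlow : ∀ ξ, ℓ ‖ξ‖ ≤ W ξ) (hupp : ∀ ξ, W ξ ≤ C * ℓ ‖ξ‖ + Λ) :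
    ∃ C' Λ' : ℝ, ∀ ξ ξ' : EuclideanSpace ℝ (Fin m × Fin d),
      (∀ j : Fin m, (∀ k : Fin d, ξ' (j, k) = 0) ∨ (∀ k : Fin d, ξ' (j, k) = ξ (j, k))) →
      W ξ' ≤ C' * W ξ + Λ' := by
  refine ⟨(1 + C) / 2, Λ / 2, fun ξ ξ' hrows => ?_⟩
  set η : EuclideanSpace ℝ (Fin m × Fin d) := (2 : ℝ) • ξ' - ξ with hη
  have hηcoord : ∀ i : Fin m × Fin d, η i = 2 * ξ' i - ξ i := fun i => rfl
  -- ‖η‖ = ‖ξ‖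
  have hnorm : ‖η‖ = ‖ξ‖ := by
    rw [EuclideanSpace.norm_eq, EuclideanSpace.norm_eq]
    congr 1
    apply Finset.sum_congr rfl
    intro i _
    obtain ⟨j, k⟩ := i
    rcases hrows j with h | h
    · rw [hηcoord, h k]
      ring_nf
      rw [norm_neg]
    · rw [hηcoord, h k]
      ring_nf
  -- ξ' is the midpoint of ξ and η
  have hmid : ξ' = (1/2 : ℝ) • ξ + (1/2 : ℝ) • η := by
    rw [hη]
    module
  have hconv2 := hconv.2 (mem_univ ξ) (mem_univ η)
      (by norm_num : (0:ℝ) ≤ 1/2) (by norm_num : (0:ℝ) ≤ 1/2) (by norm_num)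
  rw [← hmid] at hconv2
  have hWη : W η ≤ C * W ξ + Λ := by
    calc W η ≤ C * ℓ ‖η‖ + Λ := hupp η
    _ = C * ℓ ‖ξ‖ + Λ := by rw [hnorm]
    _ ≤ C * W ξ + Λ := by
        have := hlow ξ
        nlinarith
  calc W ξ' ≤ (1/2) * W ξ + (1/2) * W η := hconv2
  _ ≤ (1/2) * W ξ + (1/2) * (C * W ξ + Λ) := by linarith
  _ = (1 + C) / 2 * W ξ + Λ / 2 := by ring
end
end

section
/- Let D ⊂ ℝ^d be open bounded and let W : D × ℝ^{m×d} → [0,∞) be measurable in x and convex in ξ, with x ↦ sup_{|ζ| ≤ r} W(x,ζ) ∈ L¹(D) for all r > 0 and x ↦ sup_{|ζ| ≤ r} W*(x,ζ) ∈ L¹(D) for all r > 0. Let g ∈ W^{1,∞}(ℝ^d)^m. Then there exists a constant c such that for every u ∈ g + W₀^{1,1}(D)^m one has ∫_D W(x, ∇u) dx − ∫_D |f| |u| dx ≥ ½ ∫_D W(x, ∇u) dx − c for every f ∈ L^d(D)^m with ‖f‖_{L^d} bounded by a fixed constant; in particular the functional u ↦ ∫_D W(x,∇u) dx − ∫_D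 f·u dx is bounded below and coercive (has W^{1,1}-weakly relatively compact sublevels) on g + W₀^{1,1}(D)^m. -/
open Set Filter MeasureTheory
open scoped Topology

noncomputable section

/-- The Frobenius (Euclidean) pairing of two linear maps `ℝ^d → ℝ^m`. -/
def mpair {d m : ℕ}
    (η ζ : EuclideanSpace ℝ (Fin d) →L[ℝ] EuclideanSpace ℝ (Fin m)) : ℝ :=
  ∑ i : Fin d, (inner ℝ (η (EuclideanSpace.single i (1:ℝ)))
    (ζ (EuclideanSpace.single i (1:ℝ))) : ℝ)

/-!
Testing the conjugate bound `mpair η ζ - W x ζ ≤ S x` against `η = (C / |ζ|_F) ζ`, where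
`|ζ|_F = √(mpair ζ ζ) ≥ ‖ζ‖` is the Frobenius norm, gives the quantitative superlinearity
`C ‖ζ‖ ≤ W x ζ + S x`, hence `C ∫_D ‖∇u‖ ≤ ∫_D W(∇u) + ∫_D S`. On the other side, the
Gagliardo–Nirenberg–Sobolev inequality `‖φ‖_{d'} ≤ K ‖∇φ‖_1` for compactly supported `C¹` maps
(for `d = 1`, `d' = ∞` and it is the fundamental theorem of calculus) passes to
`u - g ∈ W₀^{1,1}(D)` by lower semicontinuity along an a.e. convergent subsequence. With Hölder
this gives `∫_D ‖f‖ ‖u‖ ≤ M (‖g‖_{d'} + K ∫_D ‖∇g‖ + K ∫_D ‖∇u‖)`, and for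
`C = 2 (M + 1) (K + 1)` the last term is absorbed by half of `∫_D W(∇u)`.
-/

open scoped NNReal ENNReal

section Frobenius

variable {d m : ℕ}

theorem mpair_smul_left (t : ℝ) (η ζ : EuclideanSpace ℝ (Fin d) →L[ℝ] EuclideanSpace ℝ (Fin m)) :
    mpair (t • η) ζ = t * mpair η ζ := by
  simp only [mpair, smul_apply, real_inner_smul_left, Finset.mul_sum]

theorem mpair_self (ζ : EuclideanSpace ℝ (Fin d) →L[ℝ] EuclideanSpace ℝ (Fin m)) :
    mpair ζ ζ = ∑ i, ‖ζ (EuclideanSpace.single i 1)‖ ^ 2 := by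
  simp only [mpair, real_inner_self_eq_norm_sq]

theorem norm_le_sqrt_mpair_self (ζ : EuclideanSpace ℝ (Fin d) →L[ℝ] EuclideanSpace ℝ (Fin m)) :
    ‖ζ‖ ≤ √(mpair ζ ζ) := by
  refine ContinuousLinearMap.opNorm_le_bound _ (Real.sqrt_nonneg _) fun x => ?_
  have hx : ζ x = ∑ i, x i • ζ (EuclideanSpace.single i 1) := by
    conv_lhs => rw [← (EuclideanSpace.basisFun (Fin d) ℝ).sum_repr x]
    simp
  calc ‖ζ x‖ ≤ ∑ i, ‖x i‖ * ‖ζ (EuclideanSpace.single i 1)‖ := by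
        rw [hx]; exact (norm_sum_le _ _).trans_eq (by simp only [norm_smul])
    _ ≤ √(∑ i, ‖x i‖ ^ 2) * √(∑ i, ‖ζ (EuclideanSpace.single i 1)‖ ^ 2) :=
        Real.sum_mul_le_sqrt_mul_sqrt _ _ _
    _ = √(mpair ζ ζ) * ‖x‖ := by rw [mpair_self, EuclideanSpace.norm_eq, mul_comm]

theorem mul_norm_le_of_mpair_sub_le {C : ℝ} (hC : 0 ≤ C)
    {w : (EuclideanSpace ℝ (Fin d) →L[ℝ] EuclideanSpace ℝ (Fin m)) → ℝ} {s : ℝ}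
    (h : ∀ η ζ, ‖η‖ ≤ C → mpair η ζ - w ζ ≤ s) (ζ) : C * ‖ζ‖ ≤ w ζ + s := by
  rcases (norm_nonneg ζ).eq_or_lt with hζ | hζ
  · have hm0 : mpair 0 ζ = 0 := by simp [mpair]
    have := h 0 ζ (by simpa using hC)
    rw [← hζ, mul_zero]
    linarith
  set r := √(mpair ζ ζ)
  have hr : ‖ζ‖ ≤ r := norm_le_sqrt_mpair_self ζ
  have hr0 : 0 < r := hζ.trans_le hr
  have hrr : r * r = mpair ζ ζ := Real.mul_self_sqrt (by rw [mpair_self]; positivity)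
  have hη : ‖(C / r) • ζ‖ ≤ C := by
    rw [norm_smul, Real.norm_of_nonneg (by positivity), div_mul_eq_mul_div, div_le_iff₀ hr0]
    exact mul_le_mul_of_nonneg_left hr hC
  have hpair : mpair ((C / r) • ζ) ζ = C * r := by
    rw [mpair_smul_left, ← hrr]; field_simp
  have := h _ ζ hη
  nlinarith [mul_le_mul_of_nonneg_left hr hC]

theorem mul_integral_norm_le_integral_add {α : Type*} [MeasurableSpace α] {μ : Measure α}
    {C : ℝ} (hC : 0 ≤ C)
    {w : α → (EuclideanSpace ℝ (Fin d) →L[ℝ] EuclideanSpace ℝ (Fin m)) → ℝ} {s : α → ℝ}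
    (hws : ∀ᵐ x ∂μ, ∀ η ζ, ‖η‖ ≤ C → mpair η ζ - w x ζ ≤ s x)
    {ζ : α → EuclideanSpace ℝ (Fin d) →L[ℝ] EuclideanSpace ℝ (Fin m)} (hζ : Integrable ζ μ)
    (hw : Integrable (fun x => w x (ζ x)) μ) (hs : Integrable s μ) :
    C * ∫ x, ‖ζ x‖ ∂μ ≤ ∫ x, w x (ζ x) ∂μ + ∫ x, s x ∂μ := by
  rw [← integral_const_mul, ← integral_add hw hs]
  exact integral_mono_ae (hζ.norm.const_mul C) (hw.add hs)
    (hws.mono fun x hx => mul_norm_le_of_mpair_sub_le hC hx (ζ x))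

end Frobenius

section Sobolev

variable {F : Type*} [NormedAddCommGroup F] [NormedSpace ℝ F]

theorem eLpNorm_top_le_eLpNorm_fderiv_one_of_fin_one {φ : EuclideanSpace ℝ (Fin 1) → F}
    (hφ : ContDiff ℝ 1 φ) (hφc : HasCompactSupport φ) :
    eLpNorm φ ∞ volume ≤ eLpNorm (fderiv ℝ φ) 1 volume := by
  let e : ℝ ≃ₗᵢ[ℝ] EuclideanSpace ℝ (Fin 1) := (OrthonormalBasis.singleton (Fin 1) ℝ).repr
  have hψ : ContDiff ℝ 1 (φ ∘ e) := hφ.comp e.toContinuousLinearEquiv.contDiff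
  have hψc : HasCompactSupport (φ ∘ e) := hφc.comp_homeomorph e.toHomeomorph
  have hderiv (t : ℝ) : ‖deriv (φ ∘ e) t‖ₑ ≤ ‖fderiv ℝ φ (e t)‖ₑ := by
    have h := (hφ.differentiable one_ne_zero (e t)).hasFDerivAt.comp t
      e.toContinuousLinearEquiv.hasFDerivAt
    rw [h.hasDerivAt.deriv]
    simpa using (fderiv ℝ φ (e t)).le_opENorm (e 1)
  rw [eLpNorm_exponent_top, eLpNorm_one_eq_lintegral_enorm]
  refine eLpNormEssSup_le_of_ae_enorm_bound (ae_of_all _ fun x => ?_)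
  calc ‖φ x‖ₑ = ‖(φ ∘ e) (e.symm x)‖ₑ := by simp
    _ ≤ ∫⁻ t in Iic (e.symm x), ‖deriv (φ ∘ e) t‖ₑ := hψc.enorm_le_lintegral_Ici_deriv hψ _
    _ ≤ ∫⁻ t, ‖fderiv ℝ φ (e t)‖ₑ := (setLIntegral_le_lintegral _ _).trans (lintegral_mono hderiv)
    _ = ∫⁻ y, ‖fderiv ℝ φ y‖ₑ :=
        e.measurePreserving.lintegral_comp_emb e.toMeasurableEquiv.measurableEmbedding
          (fun y => ‖fderiv ℝ φ y‖ₑ)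

theorem exists_eLpNorm_conjExponent_le_eLpNorm_fderiv_one {d : ℕ} (hd : 1 ≤ d) :
    ∃ K : ℝ≥0, ∀ φ : EuclideanSpace ℝ (Fin d) → F, ContDiff ℝ 1 φ → HasCompactSupport φ →
      eLpNorm φ (ENNReal.conjExponent d) volume ≤ K * eLpNorm (fderiv ℝ φ) 1 volume := by
  rcases hd.eq_or_lt with rfl | hd
  · refine ⟨1, fun φ hφ hφc => ?_⟩
    simpa [ENNReal.conjExponent] using eLpNorm_top_le_eLpNorm_fderiv_one_of_fin_one hφ hφc
  · have hd' : (1 : ℝ≥0) < d := by exact_mod_cast hd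
    refine ⟨eLpNormLESNormFDerivOneConst (volume : Measure (EuclideanSpace ℝ (Fin d)))
      (d : ℝ≥0).conjExponent, fun φ hφ hφc => ?_⟩
    rw [← ENNReal.coe_natCast, ← ENNReal.coe_conjExponent hd']
    refine eLpNorm_le_eLpNorm_fderiv_one volume hφ hφc ?_
    rw [finrank_euclideanSpace_fin]
    exact .conjExponent hd'

end Sobolev

section Holder

variable {α E F G : Type*} [MeasurableSpace α] {μ : Measure α}
  [NormedAddCommGroup E] [NormedAddCommGroup F] [NormedAddCommGroup G] {p q : ℝ≥0∞}

/-- `f` need not be measurable: Hölder is applied to `‖h‖ / ‖u‖`, which is measurable and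
bounded by `‖f‖`. -/
theorem eLpNorm_one_le_mul_of_norm_le_mul_norm [p.HolderTriple q 1] {f : α → E} {u : α → F}
    {h : α → G} (hu : AEStronglyMeasurable u μ) (hh : AEStronglyMeasurable h μ)
    (hle : ∀ x, ‖h x‖ ≤ ‖f x‖ * ‖u x‖) :
    eLpNorm h 1 μ ≤ eLpNorm f p μ * eLpNorm u q μ := by
  set r : α → ℝ := fun x => ‖h x‖ / ‖u x‖
  have hr_le (x) : ‖r x‖ ≤ ‖f x‖ := by
    rw [Real.norm_of_nonneg (by positivity)]
    exact div_le_of_le_mul₀ (norm_nonneg _) (norm_nonneg _) (hle x)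
  have hh_eq (x) : ‖h x‖ = r x * ‖u x‖ := by
    rcases (norm_nonneg (u x)).eq_or_lt with hux | hux
    · have := hle x
      rw [← hux, mul_zero] at this ⊢
      exact this.antisymm (norm_nonneg _)
    · exact (div_mul_cancel₀ _ hux.ne').symm
  calc eLpNorm h 1 μ ≤ eLpNorm (fun x => r x * ‖u x‖) 1 μ :=
        eLpNorm_mono fun x => by rw [hh_eq, Real.norm_eq_abs]; exact le_abs_self _
    _ ≤ 1 * eLpNorm r p μ * eLpNorm u q μ :=
        eLpNorm_le_eLpNorm_mul_eLpNorm'_of_norm (hh.norm.div₀ hu.norm) hu (fun a y => a * ‖y‖) 1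
          (ae_of_all _ fun x => by simp [norm_mul])
    _ ≤ eLpNorm f p μ * eLpNorm u q μ := by
        rw [one_mul]; gcongr; exact eLpNorm_mono hr_le

theorem integral_le_mul_of_abs_le_mul_norm [p.HolderTriple q 1] {f : α → E} {u : α → F}
    {h : α → ℝ} {a b : ℝ} (ha : 0 ≤ a) (hb : 0 ≤ b) (hu : AEStronglyMeasurable u μ)
    (hf : eLpNorm f p μ ≤ .ofReal a) (hub : eLpNorm u q μ ≤ .ofReal b)
    (hle : ∀ x, |h x| ≤ ‖f x‖ * ‖u x‖) :
    ∫ x, h x ∂μ ≤ a * b := by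
  by_cases hh : AEStronglyMeasurable h μ
  · rw [← ENNReal.ofReal_le_ofReal_iff (by positivity), ENNReal.ofReal_mul ha]
    calc ENNReal.ofReal (∫ x, h x ∂μ) ≤ ‖∫ x, h x ∂μ‖ₑ := Real.ofReal_le_enorm _
      _ ≤ eLpNorm h 1 μ := by
          rw [eLpNorm_one_eq_lintegral_enorm]; exact enorm_integral_le_lintegral_enorm _
      _ ≤ eLpNorm f p μ * eLpNorm u q μ := eLpNorm_one_le_mul_of_norm_le_mul_norm hu hh hle
      _ ≤ _ := mul_le_mul' hf hub
  · rw [integral_undef fun hi => hh hi.aestronglyMeasurable]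
    positivity

theorem tendsto_eLpNorm_one_of_tendsto_integral {a : ℕ → α → E} {b : ℕ → α → ℝ}
    (hb : ∀ k, Integrable (b k) μ) (hab : ∀ k x, ‖a k x‖ ≤ b k x)
    (h : Tendsto (fun k => ∫ x, b k x ∂μ) atTop (𝓝 0)) :
    Tendsto (fun k => eLpNorm (a k) 1 μ) atTop (𝓝 0) := by
  refine tendsto_of_tendsto_of_tendsto_of_le_of_le tendsto_const_nhds
    (by simpa using ENNReal.tendsto_ofReal h) (fun _ => zero_le) fun k => ?_
  rw [eLpNorm_one_eq_lintegral_enorm, ofReal_integral_eq_lintegral_ofReal (hb k)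
    (ae_of_all _ fun x => (norm_nonneg _).trans (hab k x))]
  exact lintegral_mono fun x => by rw [← ofReal_norm]; exact ENNReal.ofReal_le_ofReal (hab k x)

theorem eLpNorm_one_eq_ofReal_integral_norm {f : α → E} (hf : Integrable f μ) :
    eLpNorm f 1 μ = .ofReal (∫ x, ‖f x‖ ∂μ) := by
  rw [eLpNorm_one_eq_lintegral_enorm, ofReal_integral_norm_eq_lintegral_enorm hf]

end Holder

theorem LipschitzWith.memLp_restrict_of_isBounded {E F : Type*} [NormedAddCommGroup E]
    [ProperSpace E] [MeasurableSpace E] [BorelSpace E] [NormedAddCommGroup F] {μ : Measure E}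
    [IsFiniteMeasureOnCompacts μ] {g : E → F} {L : ℝ≥0} (hg : LipschitzWith L g) {D : Set E}
    (hD : Bornology.IsBounded D) (hDm : MeasurableSet D) (p : ℝ≥0∞) :
    MemLp g p (μ.restrict D) := by
  have : IsFiniteMeasure (μ.restrict D) := isFiniteMeasure_restrict.2 hD.measure_lt_top.ne
  obtain ⟨B, hB⟩ := (hg.isBounded_image hD).exists_norm_le
  exact .of_bound hg.continuous.aestronglyMeasurable B
    ((ae_restrict_iff' hDm).2 (ae_of_all _ fun x hx => hB _ ⟨x, hx, rfl⟩))

theorem LipschitzWith.integrableOn_of_ae_hasFDerivAt {E F : Type*} [NormedAddCommGroup E]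
    [NormedSpace ℝ E] [FiniteDimensional ℝ E] [MeasurableSpace E] [BorelSpace E]
    [NormedAddCommGroup F] [NormedSpace ℝ F] [FiniteDimensional ℝ F] {μ : Measure E}
    {D : Set E} (hD : μ D < ∞) {g : E → F} {L : ℝ≥0} (hg : LipschitzWith L g) {dg : E → E →L[ℝ] F}
    (hdg : ∀ᵐ x ∂μ, HasFDerivAt g (dg x) x) : IntegrableOn dg D μ := by
  have : IsFiniteMeasure (μ.restrict D) := isFiniteMeasure_restrict.2 hD.ne
  refine Integrable.of_bound ?_ L (ae_restrict_of_ae (hdg.mono fun x hx => hx.le_of_lipschitz hg))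
  exact ((measurable_fderiv ℝ g).aestronglyMeasurable.congr
    (hdg.mono fun x hx => hx.fderiv)).restrict

section Approximation

variable {E F : Type*} [NormedAddCommGroup E] [NormedSpace ℝ E] [FiniteDimensional ℝ E]
  [MeasurableSpace E] [BorelSpace E] [NormedAddCommGroup F] [NormedSpace ℝ F] {μ : Measure E}

theorem eLpNorm_le_of_tendsto_of_tsupport_subset {p : ℝ≥0∞} {K : ℝ≥0}
    (hK : ∀ φ : E → F, ContDiff ℝ 1 φ → HasCompactSupport φ →
      eLpNorm φ p μ ≤ K * eLpNorm (fderiv ℝ φ) 1 μ)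
    {D : Set E} {φ : ℕ → E → F}
    (hφ : ∀ k, ContDiff ℝ 1 (φ k) ∧ HasCompactSupport (φ k) ∧ tsupport (φ k) ⊆ D)
    {v : E → F} (hv : AEStronglyMeasurable v (μ.restrict D))
    {w : E → E →L[ℝ] F} (hw : AEStronglyMeasurable w (μ.restrict D))
    (hφv : Tendsto (fun k => eLpNorm (φ k - v) 1 (μ.restrict D)) atTop (𝓝 0))
    (hφw : Tendsto (fun k => eLpNorm (fderiv ℝ (φ k) - w) 1 (μ.restrict D)) atTop (𝓝 0)) :
    eLpNorm v p (μ.restrict D) ≤ K * eLpNorm w 1 (μ.restrict D) := by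
  set B : ℕ → ℝ≥0∞ := fun k =>
    K * (eLpNorm w 1 (μ.restrict D) + eLpNorm (fderiv ℝ (φ k) - w) 1 (μ.restrict D))
  have hφB (k) : eLpNorm (φ k) p (μ.restrict D) ≤ B k := by
    obtain ⟨hφ1, hφc, hφD⟩ := hφ k
    have hsupp : (fderiv ℝ (φ k)).support ⊆ D := (support_fderiv_subset ℝ).trans hφD
    calc eLpNorm (φ k) p (μ.restrict D) ≤ eLpNorm (φ k) p μ :=
          eLpNorm_mono_measure _ Measure.restrict_le_self
      _ ≤ K * eLpNorm (fderiv ℝ (φ k)) 1 (μ.restrict D) := by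
          rw [eLpNorm_restrict_eq_of_support_subset (ε := E →L[ℝ] F) hsupp]; exact hK _ hφ1 hφc
      _ ≤ B k := by
          refine mul_le_mul_right ?_ _
          simpa using eLpNorm_add_le hw
            ((hφ1.continuous_fderiv one_ne_zero).aestronglyMeasurable.sub hw) le_rfl
  have hB : Tendsto B atTop (𝓝 (K * eLpNorm w 1 (μ.restrict D))) := by
    simpa using ENNReal.Tendsto.const_mul (tendsto_const_nhds.add hφw) (.inr ENNReal.coe_ne_top)
  have hφm (k) : AEStronglyMeasurable (φ k) (μ.restrict D) :=
    (hφ k).1.continuous.aestronglyMeasurable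
  refine le_of_forall_gt_imp_ge_of_dense fun c hc => ?_
  exact eLpNorm_le_of_tendstoInMeasure ((hB.eventually (gt_mem_nhds hc)).mono fun k hk =>
      (hφB k).trans hk.le) (tendstoInMeasure_of_tendsto_eLpNorm one_ne_zero hφm hv hφv) hφm

theorem eLpNorm_le_add_of_tendsto_integral [IsFiniteMeasureOnCompacts μ] {p : ℝ≥0∞}
    (hp : 1 ≤ p) {K : ℝ≥0} (hK : ∀ φ : E → F, ContDiff ℝ 1 φ → HasCompactSupport φ →
      eLpNorm φ p μ ≤ K * eLpNorm (fderiv ℝ φ) 1 μ)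
    {D : Set E} {g u : E → F} {dg du : E → E →L[ℝ] F} (hg : IntegrableOn g D μ)
    (hu : IntegrableOn u D μ) (hdg : IntegrableOn dg D μ) (hdu : IntegrableOn du D μ)
    {φ : ℕ → E → F}
    (hφ : ∀ k, ContDiff ℝ 1 (φ k) ∧ HasCompactSupport (φ k) ∧ tsupport (φ k) ⊆ D)
    (hlim : Tendsto (fun k => ∫ x in D,
      (‖g x + φ k x - u x‖ + ‖dg x + fderiv ℝ (φ k) x - du x‖) ∂μ) atTop (𝓝 0)) :
    eLpNorm u p (μ.restrict D) ≤ eLpNorm g p (μ.restrict D)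
      + K * (eLpNorm du 1 (μ.restrict D) + eLpNorm dg 1 (μ.restrict D)) := by
  have hint (k) : IntegrableOn
      (fun x => ‖g x + φ k x - u x‖ + ‖dg x + fderiv ℝ (φ k) x - du x‖) D μ := by
    obtain ⟨hφ1, hφc, -⟩ := hφ k
    have hφi := (hφ1.continuous.integrable_of_hasCompactSupport (μ := μ) hφc).integrableOn
      (s := D)
    have hdφi := ((hφ1.continuous_fderiv one_ne_zero).integrable_of_hasCompactSupport
      (μ := μ) (hφc.fderiv (𝕜 := ℝ))).integrableOn (s := D)
    exact ((hg.add hφi).sub hu).norm.add ((hdg.add hdφi).sub hdu).norm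
  have hsub : eLpNorm (u - g) p (μ.restrict D) ≤ K * eLpNorm (du - dg) 1 (μ.restrict D) := by
    refine eLpNorm_le_of_tendsto_of_tsupport_subset hK hφ (hu.1.sub hg.1) (hdu.1.sub hdg.1)
      (tendsto_eLpNorm_one_of_tendsto_integral hint (fun k x => ?_) hlim)
      (tendsto_eLpNorm_one_of_tendsto_integral hint (fun k x => ?_) hlim)
    · refine le_add_of_le_of_nonneg (le_of_eq ?_) (norm_nonneg _)
      congr 1; simp only [Pi.sub_apply]; abel
    · refine le_add_of_nonneg_of_le (norm_nonneg _) (le_of_eq ?_)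
      congr 1; simp only [Pi.sub_apply]; abel
  calc eLpNorm u p (μ.restrict D) = eLpNorm (g + (u - g)) p (μ.restrict D) := by
        rw [add_sub_cancel]
    _ ≤ eLpNorm g p (μ.restrict D) + eLpNorm (u - g) p (μ.restrict D) :=
        eLpNorm_add_le hg.1 (hu.1.sub hg.1) hp
    _ ≤ _ := by
        gcongr
        exact hsub.trans (mul_le_mul_right (eLpNorm_sub_le hdu.1 hdg.1 le_rfl) _)

end Approximation

theorem stmt16_general (d m : ℕ) (hd : 1 ≤ d)
    (D : Set (EuclideanSpace ℝ (Fin d))) (hDo : IsOpen D) (hDb : Bornology.IsBounded D)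
    (W : EuclideanSpace ℝ (Fin d) →
      (EuclideanSpace ℝ (Fin d) →L[ℝ] EuclideanSpace ℝ (Fin m)) → ℝ)
    (h0 : ∀ x ξ, 0 ≤ W x ξ)
    (hWconj : ∀ r : ℝ, 0 < r → ∃ S, IntegrableOn S D volume ∧
      ∀ᵐ x ∂(volume.restrict D), ∀ η ζ, ‖η‖ ≤ r → mpair η ζ - W x ζ ≤ S x)
    (g : EuclideanSpace ℝ (Fin d) → EuclideanSpace ℝ (Fin m))
    (Lg : NNReal) (hg : LipschitzWith Lg g)
    (dg : EuclideanSpace ℝ (Fin d) →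
      (EuclideanSpace ℝ (Fin d) →L[ℝ] EuclideanSpace ℝ (Fin m)))
    (hdg : ∀ᵐ x ∂volume, HasFDerivAt g (dg x) x)
    (M : ℝ) (hM : 0 ≤ M) :
    ∃ c : ℝ,
      ∀ (f u : EuclideanSpace ℝ (Fin d) → EuclideanSpace ℝ (Fin m))
        (du : EuclideanSpace ℝ (Fin d) →
          (EuclideanSpace ℝ (Fin d) →L[ℝ] EuclideanSpace ℝ (Fin m))),
        eLpNorm f d (volume.restrict D) ≤ ENNReal.ofReal M →
        (∀ᵐ x ∂volume, HasFDerivAt u (du x) x) →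
        -- u ∈ g + W₀^{1,1}(D): approximation in W^{1,1} by g + C¹ compactly supported maps
        (∃ φ : ℕ → EuclideanSpace ℝ (Fin d) → EuclideanSpace ℝ (Fin m),
          (∀ k, ContDiff ℝ 1 (φ k) ∧ HasCompactSupport (φ k) ∧ tsupport (φ k) ⊆ D) ∧
          Tendsto (fun k => ∫ x in D,
              (‖g x + φ k x - u x‖ + ‖dg x + fderiv ℝ (φ k) x - du x‖)) atTop (𝓝 0)) →
        IntegrableOn u D volume → IntegrableOn du D volume →
        IntegrableOn (fun x => W x (du x)) D volume →
        ((∫ x in D, W x (du x)) - (∫ x in D, ‖f x‖ * ‖u x‖) ≥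
            (1 / 2) * (∫ x in D, W x (du x)) - c) ∧
        ((∫ x in D, W x (du x)) - (∫ x in D, (inner ℝ (f x) (u x) : ℝ)) ≥ -c) := by
  set ν := volume.restrict D
  set q := ENNReal.conjExponent d
  have hdq : ENNReal.HolderConjugate d q := .conjExponent (by exact_mod_cast hd)
  obtain ⟨K, hK⟩ := exists_eLpNorm_conjExponent_le_eLpNorm_fderiv_one
    (F := EuclideanSpace ℝ (Fin m)) hd
  have hgq := hg.memLp_restrict_of_isBounded (μ := volume) hDb hDo.measurableSet q
  have hgD : IntegrableOn g D := memLp_one_iff_integrable.1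
    (hg.memLp_restrict_of_isBounded hDb hDo.measurableSet 1)
  have hdgD : IntegrableOn dg D := hg.integrableOn_of_ae_hasFDerivAt hDb.measure_lt_top hdg
  set N := (eLpNorm g q ν).toReal
  set G := ∫ x in D, ‖dg x‖
  set C : ℝ := 2 * (M + 1) * (K + 1)
  obtain ⟨S, hS, hWS⟩ := hWconj C (by positivity)
  refine ⟨M * (N + K * G) + |∫ x in D, S x| / 2,
    fun f u du hf _ ⟨φ, hφ, hlim⟩ hu hdu hW => ?_⟩
  set A := ∫ x in D, ‖du x‖
  have huq : eLpNorm u q ν ≤ .ofReal (N + K * (A + G)) := by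
    refine (eLpNorm_le_add_of_tendsto_integral hdq.symm.one_le hK hgD hu hdgD hdu hφ hlim).trans ?_
    rw [eLpNorm_one_eq_ofReal_integral_norm hdu, eLpNorm_one_eq_ofReal_integral_norm hdgD,
      ENNReal.ofReal_add (by positivity) (by positivity), ENNReal.ofReal_toReal hgq.2.ne,
      ENNReal.ofReal_mul (by positivity), ENNReal.ofReal_coe_nnreal,
      ENNReal.ofReal_add (by positivity) (by positivity)]
  have hpair (h : EuclideanSpace ℝ (Fin d) → ℝ) (hh : ∀ x, |h x| ≤ ‖f x‖ * ‖u x‖) :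
      ∫ x in D, h x ≤ M * (N + K * (A + G)) :=
    integral_le_mul_of_abs_le_mul_norm hM (by positivity) hu.1 hf huq hh
  have h1 := hpair (fun x => ‖f x‖ * ‖u x‖) fun x => (abs_of_nonneg (by positivity)).le
  have h2 := hpair (fun x => inner ℝ (f x) (u x)) fun x => abs_real_inner_le_norm _ _
  have hCA := mul_integral_norm_le_integral_add (by positivity) hWS hdu hW hS
  have hMKA : 2 * M * K * A ≤ C * A :=
    mul_le_mul_of_nonneg_right (by nlinarith [K.2]) (integral_nonneg fun x => norm_nonneg _)
  have hE : 0 ≤ ∫ x in D, W x (du x) := integral_nonneg fun x => h0 x (du x)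
  constructor <;> nlinarith [le_abs_self (∫ x in D, S x)]

/-- Coercivity of the functional `u ↦ ∫_D W(x,∇u) − ∫_D f·u` on `g + W₀^{1,1}(D)^m`:
under local boundedness and integrability of the conjugate `sup_{‖η‖≤r} W*(x,·)`,
there is a constant `c` such that for every `f` with `‖f‖_{L^d(D)} ≤ M` and every
`u ∈ g + W₀^{1,1}(D)^m` (encoded via a.e. differentiability and `W^{1,1}`-approximation
by smooth compactly supported perturbations of `g`) with finite energy:
`∫_D W(x,∇u) − ∫_D ‖f‖‖u‖ ≥ ½ ∫_D W(x,∇u) − c`, and in particular the functional is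
bounded below by `−c`. -/
theorem stmt16 (d m : ℕ) (hd : 1 ≤ d)
    (D : Set (EuclideanSpace ℝ (Fin d))) (hDo : IsOpen D) (hDb : Bornology.IsBounded D)
    (W : EuclideanSpace ℝ (Fin d) →
      (EuclideanSpace ℝ (Fin d) →L[ℝ] EuclideanSpace ℝ (Fin m)) → ℝ)
    (h0 : ∀ x ξ, 0 ≤ W x ξ) (hconv : ∀ x, ConvexOn ℝ univ (W x))
    (hWb : ∀ r : ℝ, 0 < r → ∃ S, IntegrableOn S D volume ∧
      ∀ᵐ x ∂(volume.restrict D), ∀ ζ, ‖ζ‖ ≤ r → W x ζ ≤ S x)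
    (hWconj : ∀ r : ℝ, 0 < r → ∃ S, IntegrableOn S D volume ∧
      ∀ᵐ x ∂(volume.restrict D), ∀ η ζ, ‖η‖ ≤ r → mpair η ζ - W x ζ ≤ S x)
    (g : EuclideanSpace ℝ (Fin d) → EuclideanSpace ℝ (Fin m))
    (Lg : NNReal) (hg : LipschitzWith Lg g)
    (dg : EuclideanSpace ℝ (Fin d) →
      (EuclideanSpace ℝ (Fin d) →L[ℝ] EuclideanSpace ℝ (Fin m)))
    (hdg : ∀ᵐ x ∂volume, HasFDerivAt g (dg x) x)
    (M : ℝ) (hM : 0 ≤ M) :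
    ∃ c : ℝ,
      ∀ (f u : EuclideanSpace ℝ (Fin d) → EuclideanSpace ℝ (Fin m))
        (du : EuclideanSpace ℝ (Fin d) →
          (EuclideanSpace ℝ (Fin d) →L[ℝ] EuclideanSpace ℝ (Fin m))),
        eLpNorm f d (volume.restrict D) ≤ ENNReal.ofReal M →
        (∀ᵐ x ∂volume, HasFDerivAt u (du x) x) →
        -- u ∈ g + W₀^{1,1}(D): approximation in W^{1,1} by g + C¹ compactly supported maps
        (∃ φ : ℕ → EuclideanSpace ℝ (Fin d) → EuclideanSpace ℝ (Fin m),
          (∀ k, ContDiff ℝ 1 (φ k) ∧ HasCompactSupport (φ k) ∧ tsupport (φ k) ⊆ D) ∧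
          Tendsto (fun k => ∫ x in D,
              (‖g x + φ k x - u x‖ + ‖dg x + fderiv ℝ (φ k) x - du x‖)) atTop (𝓝 0)) →
        IntegrableOn u D volume → IntegrableOn du D volume →
        IntegrableOn (fun x => W x (du x)) D volume →
        ((∫ x in D, W x (du x)) - (∫ x in D, ‖f x‖ * ‖u x‖) ≥
            (1 / 2) * (∫ x in D, W x (du x)) - c) ∧
        ((∫ x in D, W x (du x)) - (∫ x in D, (inner ℝ (f x) (u x) : ℝ)) ≥ -c) :=
  stmt16_general d m hd D hDo hDb W h0 hWconj g Lg hg dg hdg M hM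
end
end

section
/- Let Ω be a probability space, W̄ : Ω × ℝ^{m×d} → [0,∞) jointly measurable, convex in the second variable a.s., with E[sup_{|η|≤r} W̄(·,η)] < ∞ and E[sup_{|η|≤r} W̄*(·,η)] < ∞ for all r > 0. Let H ⊂ L¹(Ω)^{m×d} be the (weakly closed) space of potential fields with mean zero, and define W_hom(ξ) := inf_{h ∈ H} E[W̄(·, ξ + h)]. Then W_hom is a finite convex function on ℝ^{m×d} which is superlinear at infinity: W_hom(ξ)/|ξ| → ∞ as |ξ| → ∞. -/
open Set MeasureTheory

/-!
`W_hom` is finite because `h = 0` is an admissible corrector. Averaging almost-optimal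
correctors for `ξ₁` and `ξ₂` gives an admissible corrector for the convex combination (`H` is
linear), whose energy is controlled by convexity of `W(ω, ·)`; hence `W_hom` is convex.
For superlinearity, test the conjugate bound with `η = C ξ / ‖ξ‖`: correctors have mean zero,
so `C ‖ξ‖ = E[⟪η, ξ + h⟫] ≤ E[W(·, ξ + h)] + E[S_C]`, i.e. `W_hom ≥ C ‖ξ‖ - E[S_C]` for all `C`.
-/

def correctorEnergies {Ω E : Type*} [MeasurableSpace Ω] [Add E] (μ : Measure Ω)
    (W : Ω → E → ℝ) (H : Set (Ω → E)) (ξ : E) : Set ℝ :=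
  {r | ∃ h ∈ H, Integrable (fun ω => W ω (ξ + h ω)) μ ∧ r = ∫ ω, W ω (ξ + h ω) ∂μ}

theorem convexOn_univ_sInf {E : Type*} [AddCommMonoid E] [Module ℝ E] {A : E → Set ℝ}
    (hne : ∀ ξ, (A ξ).Nonempty) (hbdd : ∀ ξ, BddBelow (A ξ))
    (hcomb : ∀ ξ₁ ξ₂ r₁ r₂ (a b : ℝ), r₁ ∈ A ξ₁ → r₂ ∈ A ξ₂ → 0 ≤ a → 0 ≤ b → a + b = 1 →
      ∃ r ∈ A (a • ξ₁ + b • ξ₂), r ≤ a * r₁ + b * r₂) :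
    ConvexOn ℝ univ fun ξ => sInf (A ξ) := by
  refine ⟨convex_univ, fun ξ₁ _ ξ₂ _ a b ha hb hab => le_of_forall_pos_le_add fun ε hε => ?_⟩
  obtain ⟨r₁, hr₁, hlt₁⟩ := Real.lt_sInf_add_pos (hne ξ₁) hε
  obtain ⟨r₂, hr₂, hlt₂⟩ := Real.lt_sInf_add_pos (hne ξ₂) hε
  obtain ⟨r, hr, hle⟩ := hcomb ξ₁ ξ₂ r₁ r₂ a b hr₁ hr₂ ha hb hab
  have hinf := csInf_le (hbdd _) hr
  simp only [smul_eq_mul]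
  nlinarith

theorem superlinear_of_forall_affine_minorant {E : Type*} [SeminormedAddCommGroup E]
    {f : E → ℝ} (hf : ∀ C : ℝ, 0 < C → ∃ K : ℝ, ∀ ξ, C * ‖ξ‖ - K ≤ f ξ) (C : ℝ) :
    ∃ R : ℝ, ∀ ξ : E, R ≤ ‖ξ‖ → C * ‖ξ‖ ≤ f ξ := by
  obtain ⟨K, hK⟩ := hf (max C 0 + 1) (by positivity)
  refine ⟨max K 0, fun ξ hξ => ?_⟩
  have hCle : C * ‖ξ‖ ≤ max C 0 * ‖ξ‖ := by gcongr; exact le_max_left C 0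
  nlinarith [hK ξ, le_max_left K 0, le_max_right K 0]

theorem exists_norm_le_inner_eq_mul_norm {E : Type*} [NormedAddCommGroup E]
    [InnerProductSpace ℝ E] {C : ℝ} (hC : 0 ≤ C) (ξ : E) :
    ∃ η : E, ‖η‖ ≤ C ∧ inner ℝ η ξ = C * ‖ξ‖ := by
  refine ⟨(C * ‖ξ‖⁻¹) • ξ, ?_, ?_⟩
  · rw [norm_smul, Real.norm_of_nonneg (by positivity), mul_assoc]
    exact mul_le_of_le_one_right hC (inv_mul_le_one_of_le₀ le_rfl (norm_nonneg ξ))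
  · rw [real_inner_smul_left, real_inner_self_eq_norm_sq]
    rcases eq_or_ne ‖ξ‖ 0 with h | h
    · simp [h]
    · field_simp

section Correctors

variable {Ω E : Type*} [MeasurableSpace Ω] {μ : Measure Ω} {W : Ω → E → ℝ} {H : Set (Ω → E)}

theorem bddBelow_correctorEnergies [Add E] (h0 : ∀ ω ξ, 0 ≤ W ω ξ) (ξ : E) :
    BddBelow (correctorEnergies μ W H ξ) := by
  refine ⟨0, ?_⟩
  rintro r ⟨h, -, -, rfl⟩
  exact integral_nonneg fun ω => h0 _ _

theorem integral_mem_correctorEnergies [AddZeroClass E] (hH0 : (fun _ => (0 : E)) ∈ H) {ξ : E}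
    (hint : Integrable (fun ω => W ω ξ) μ) :
    ∫ ω, W ω ξ ∂μ ∈ correctorEnergies μ W H ξ :=
  ⟨fun _ => 0, hH0, by simpa using hint, by simp⟩

theorem integrable_apply_of_forall_bounded [SeminormedAddCommGroup E] [MeasurableSpace E]
    (hmeas : Measurable (Function.uncurry W))
    (h0 : ∀ ω ξ, 0 ≤ W ω ξ)
    (hWb : ∀ r : ℝ, 0 < r → ∃ S : Ω → ℝ, Integrable S μ ∧
      ∀ᵐ ω ∂μ, ∀ η : E, ‖η‖ ≤ r → W ω η ≤ S ω) (ξ : E) :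
    Integrable (fun ω => W ω ξ) μ := by
  obtain ⟨S, hS, hSb⟩ := hWb (‖ξ‖ + 1) (by positivity)
  refine hS.mono' (hmeas.comp (measurable_id.prodMk measurable_const)).aestronglyMeasurable ?_
  filter_upwards [hSb] with ω hω
  rw [Real.norm_of_nonneg (h0 _ _)]
  exact hω ξ (by linarith)

theorem AEMeasurable.aestronglyMeasurable_apply_add [Add E] [MeasurableSpace E] [MeasurableAdd E]
    (hmeas : Measurable (Function.uncurry W))
    {h : Ω → E} (hh : AEMeasurable h μ) (ξ : E) :
    AEStronglyMeasurable (fun ω => W ω (ξ + h ω)) μ :=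
  (hmeas.comp_aemeasurable (aemeasurable_id.prodMk (hh.const_add ξ))).aestronglyMeasurable

theorem exists_mem_correctorEnergies_le_smul_add [NormedAddCommGroup E] [NormedSpace ℝ E]
    [MeasurableSpace E] [BorelSpace E] (hmeas : Measurable (Function.uncurry W))
    (h0 : ∀ ω ξ, 0 ≤ W ω ξ) (hconv : ∀ᵐ ω ∂μ, ConvexOn ℝ univ (W ω))
    (hHsub : ∀ h₁ ∈ H, ∀ h₂ ∈ H, ∀ a b : ℝ, (fun ω => a • h₁ ω + b • h₂ ω) ∈ H)
    (hHint : ∀ h ∈ H, Integrable h μ) {ξ₁ ξ₂ : E} {r₁ r₂ a b : ℝ}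
    (hr₁ : r₁ ∈ correctorEnergies μ W H ξ₁) (hr₂ : r₂ ∈ correctorEnergies μ W H ξ₂)
    (ha : 0 ≤ a) (hb : 0 ≤ b) (hab : a + b = 1) :
    ∃ r ∈ correctorEnergies μ W H (a • ξ₁ + b • ξ₂), r ≤ a * r₁ + b * r₂ := by
  obtain ⟨h₁, hh₁, hint₁, rfl⟩ := hr₁
  obtain ⟨h₂, hh₂, hint₂, rfl⟩ := hr₂
  set h : Ω → E := fun ω => a • h₁ ω + b • h₂ ω
  have hpointwise : ∀ᵐ ω ∂μ, W ω (a • ξ₁ + b • ξ₂ + h ω) ≤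
      a * W ω (ξ₁ + h₁ ω) + b * W ω (ξ₂ + h₂ ω) := by
    filter_upwards [hconv] with ω hω
    have hcomb : a • ξ₁ + b • ξ₂ + h ω = a • (ξ₁ + h₁ ω) + b • (ξ₂ + h₂ ω) := by
      simp only [h]; module
    rw [hcomb]
    exact hω.2 (mem_univ _) (mem_univ _) ha hb hab
  have hmix : Integrable (fun ω => a * W ω (ξ₁ + h₁ ω) + b * W ω (ξ₂ + h₂ ω)) μ :=
    (hint₁.const_mul a).add (hint₂.const_mul b)
  have hhmeas : AEMeasurable h μ :=
    (((hHint h₁ hh₁).smul a).add ((hHint h₂ hh₂).smul b)).aemeasurable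
  have hint : Integrable (fun ω => W ω (a • ξ₁ + b • ξ₂ + h ω)) μ := by
    refine hmix.mono' (hhmeas.aestronglyMeasurable_apply_add hmeas _) ?_
    filter_upwards [hpointwise] with ω hω
    rwa [Real.norm_of_nonneg (h0 _ _)]
  refine ⟨_, ⟨h, hHsub h₁ hh₁ h₂ hh₂ a b, hint, rfl⟩, ?_⟩
  calc ∫ ω, W ω (a • ξ₁ + b • ξ₂ + h ω) ∂μ
      ≤ ∫ ω, (a * W ω (ξ₁ + h₁ ω) + b * W ω (ξ₂ + h₂ ω)) ∂μ := integral_mono_ae hint hmix hpointwise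
    _ = a * ∫ ω, W ω (ξ₁ + h₁ ω) ∂μ + b * ∫ ω, W ω (ξ₂ + h₂ ω) ∂μ := by
      rw [integral_add (hint₁.const_mul a) (hint₂.const_mul b), integral_const_mul,
        integral_const_mul]

theorem mul_norm_sub_le_of_mem_correctorEnergies [IsProbabilityMeasure μ]
    [NormedAddCommGroup E] [InnerProductSpace ℝ E] [CompleteSpace E]
    (hHmeanzero : ∀ h ∈ H, Integrable h μ ∧ ∫ ω, h ω ∂μ = 0) {C : ℝ} (hC : 0 ≤ C)
    {S : Ω → ℝ} (hS : Integrable S μ)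
    (hSb : ∀ᵐ ω ∂μ, ∀ η ξ : E, ‖η‖ ≤ C → (inner ℝ η ξ : ℝ) - W ω ξ ≤ S ω)
    {ξ : E} {r : ℝ} (hr : r ∈ correctorEnergies μ W H ξ) :
    C * ‖ξ‖ - ∫ ω, S ω ∂μ ≤ r := by
  obtain ⟨h, hh, hint, rfl⟩ := hr
  obtain ⟨hhint, hhmean⟩ := hHmeanzero h hh
  obtain ⟨η, hη, hηξ⟩ := exists_norm_le_inner_eq_mul_norm hC ξ
  have hinner : Integrable (fun ω => (inner ℝ η (ξ + h ω) : ℝ)) μ := by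
    refine ((integrable_const (inner ℝ η ξ)).add (hhint.const_inner η)).congr ?_
    exact ae_of_all _ fun ω => (inner_add_right _ _ _).symm
  have hmean : ∫ ω, (inner ℝ η (ξ + h ω) : ℝ) ∂μ = C * ‖ξ‖ := by
    simp only [inner_add_right]
    rw [integral_add (integrable_const _) (hhint.const_inner η), integral_inner hhint,
      hhmean, inner_zero_right, integral_const, probReal_univ, one_smul, add_zero, hηξ]
  have hle : ∫ ω, ((inner ℝ η (ξ + h ω) : ℝ) - W ω (ξ + h ω)) ∂μ ≤ ∫ ω, S ω ∂μ := by
    refine integral_mono_ae (hinner.sub hint) hS ?_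
    filter_upwards [hSb] with ω hω
    exact hω η _ hη
  rw [integral_sub hinner hint, hmean] at hle
  linarith

end Correctors

/-- The homogenized integrand `W_hom(ξ) = inf_{h ∈ H} E[W̄(·, ξ + h)]`, where `H` is a
(weakly closed) subspace of mean-zero potential fields in `L¹(Ω)^{m×d}`, is a finite
convex function which is superlinear at infinity, under joint measurability of `W̄`,
a.s. convexity in the second variable and integrability of `sup_{‖η‖≤r} W̄(·,η)` and of
`sup_{‖η‖≤r} W̄*(·,η)` for all `r > 0`. -/
theorem stmt19 {Ω : Type*} [MeasurableSpace Ω] (μ : Measure Ω) [IsProbabilityMeasure μ]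
    (m d : ℕ) (W : Ω → EuclideanSpace ℝ (Fin m × Fin d) → ℝ)
    (hmeas : Measurable (Function.uncurry W))
    (h0 : ∀ ω ξ, 0 ≤ W ω ξ)
    (hconv : ∀ᵐ ω ∂μ, ConvexOn ℝ univ (W ω))
    (hWb : ∀ r : ℝ, 0 < r → ∃ S : Ω → ℝ, Integrable S μ ∧
      ∀ᵐ ω ∂μ, ∀ η : EuclideanSpace ℝ (Fin m × Fin d), ‖η‖ ≤ r → W ω η ≤ S ω)
    (hWconj : ∀ r : ℝ, 0 < r → ∃ S : Ω → ℝ, Integrable S μ ∧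
      ∀ᵐ ω ∂μ, ∀ η ξ : EuclideanSpace ℝ (Fin m × Fin d),
        ‖η‖ ≤ r → (inner ℝ η ξ : ℝ) - W ω ξ ≤ S ω)
    (H : Set (Ω → EuclideanSpace ℝ (Fin m × Fin d)))
    (hH0 : (fun _ => (0 : EuclideanSpace ℝ (Fin m × Fin d))) ∈ H)
    (hHsub : ∀ h₁ ∈ H, ∀ h₂ ∈ H, ∀ a b : ℝ,
      (fun ω => a • h₁ ω + b • h₂ ω) ∈ H)
    (hHmeanzero : ∀ h ∈ H, Integrable h μ ∧ ∫ ω, h ω ∂μ = 0)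
    (Whom : EuclideanSpace ℝ (Fin m × Fin d) → ℝ)
    (hWhom : ∀ ξ, Whom ξ =
      sInf {r : ℝ | ∃ h ∈ H, Integrable (fun ω => W ω (ξ + h ω)) μ ∧
        r = ∫ ω, W ω (ξ + h ω) ∂μ}) :
    ConvexOn ℝ univ Whom ∧
    (∀ ξ, Whom ξ ≤ ∫ ω, W ω ξ ∂μ) ∧
    (∀ C : ℝ, ∃ R : ℝ, ∀ ξ : EuclideanSpace ℝ (Fin m × Fin d),
      R ≤ ‖ξ‖ → C * ‖ξ‖ ≤ Whom ξ) := by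
  obtain rfl : Whom = fun ξ => sInf (correctorEnergies μ W H ξ) := funext hWhom
  have hmem : ∀ ξ, ∫ ω, W ω ξ ∂μ ∈ correctorEnergies μ W H ξ := fun ξ =>
    integral_mem_correctorEnergies hH0 (integrable_apply_of_forall_bounded hmeas h0 hWb ξ)
  refine ⟨?_, fun ξ => csInf_le (bddBelow_correctorEnergies h0 ξ) (hmem ξ), ?_⟩
  · exact convexOn_univ_sInf (fun ξ => ⟨_, hmem ξ⟩) (bddBelow_correctorEnergies h0)
      fun _ _ _ _ _ _ hr₁ hr₂ ha hb hab =>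
        exists_mem_correctorEnergies_le_smul_add hmeas h0 hconv hHsub
          (fun h hh => (hHmeanzero h hh).1) hr₁ hr₂ ha hb hab
  · refine superlinear_of_forall_affine_minorant fun C hC => ?_
    obtain ⟨S, hS, hSb⟩ := hWconj C hC
    exact ⟨∫ ω, S ω ∂μ, fun ξ => le_csInf ⟨_, hmem ξ⟩ fun _ hr =>
      mul_norm_sub_le_of_mem_correctorEnergies hHmeanzero hC.le hS hSb hr⟩
end
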